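/- A proper ideal I of 𝕂̃ is prime if and only if I is pseudoprime and radical; explicitly, if and only if (for every S ⊆ (0,1), e_S ∈ I or e_{∁S} ∈ I) and (for every x ∈ I, the class of the net (√|x_ε|)_ε belongs to I, where (x_ε)_ε is any representative of x). -/

import Mathlib

noncomputable section

set_option maxHeartbeats 1000000
set_option synthInstance.maxHeartbeats 400000

open scoped Classical

/-- The index set `(0,1) ⊆ ℝ` of the nets. -/
abbrev Eps : Type := Set.Ioo (0:ℝ) 1

variable (K : Type) [RCLike K]

/-- A net `(x_ε)_{ε ∈ (0,1)}` is moderate if `|x_ε| ≤ ε^a` for some `a ∈ ℝ`,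
for all sufficiently small `ε`. -/
def IsModerate (x : Eps → K) : Prop :=
  ∃ a : ℝ, ∃ ε₀ ∈ Set.Ioo (0:ℝ) 1, ∀ ε : Eps, (ε : ℝ) ≤ ε₀ → ‖x ε‖ ≤ (ε : ℝ) ^ a

/-- A net `(x_ε)_{ε ∈ (0,1)}` is negligible if for every `a ∈ ℝ`, `|x_ε| ≤ ε^a`
for all sufficiently small `ε`. -/
def IsNegligible (x : Eps → K) : Prop :=
  ∀ a : ℝ, ∃ ε₀ ∈ Set.Ioo (0:ℝ) 1, ∀ ε : Eps, (ε : ℝ) ≤ ε₀ → ‖x ε‖ ≤ (ε : ℝ) ^ a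

theorem rpow_two_bound {ε : ℝ} (h0 : 0 < ε) (h2 : ε ≤ 1/2) (a b : ℝ) :
    ε ^ a + ε ^ b ≤ ε ^ (min a b - 1) := by
  have h1 : ε ≤ 1 := h2.trans (by norm_num)
  have ha : ε ^ a ≤ ε ^ min a b :=
    Real.rpow_le_rpow_of_exponent_ge h0 h1 (min_le_left a b)
  have hb : ε ^ b ≤ ε ^ min a b :=
    Real.rpow_le_rpow_of_exponent_ge h0 h1 (min_le_right a b)
  have key : 2 * ε ^ min a b ≤ ε ^ (min a b - 1) := by
    rw [Real.rpow_sub h0, Real.rpow_one, le_div_iff₀ h0]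
    have hx : (0:ℝ) ≤ ε ^ min a b := (Real.rpow_pos_of_pos h0 _).le
    calc 2 * ε ^ min a b * ε ≤ 2 * ε ^ min a b * (1/2) := by
          apply mul_le_mul_of_nonneg_left h2 (by positivity)
      _ = ε ^ min a b := by ring
  calc ε ^ a + ε ^ b ≤ 2 * ε ^ min a b := by linarith
    _ ≤ ε ^ (min a b - 1) := key

/-- The ring of moderate nets, as a subring of `K^{(0,1)}`. -/
def Moderate : Subring (Eps → K) where
  carrier := {x | IsModerate K x}
  zero_mem' := by
    refine ⟨0, 1/2, by constructor <;> norm_num, fun ε _ => ?_⟩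
    simp [Real.rpow_zero]
  one_mem' := by
    refine ⟨0, 1/2, by constructor <;> norm_num, fun ε _ => ?_⟩
    simp [Real.rpow_zero]
  add_mem' := by
    rintro x y ⟨a, ε₀, h₀, ha⟩ ⟨b, ε₁, h₁, hb⟩
    refine ⟨min a b - 1, min (min ε₀ ε₁) (1/2), ⟨lt_min (lt_min h₀.1 h₁.1) (by norm_num), ?_⟩,
      fun ε hε => ?_⟩
    · calc min (min ε₀ ε₁) (1/2) ≤ 1/2 := min_le_right _ _
        _ < 1 := by norm_num
    · have hε₀ : (ε:ℝ) ≤ ε₀ := le_trans hε (le_trans (min_le_left _ _) (min_le_left _ _))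
      have hε₁ : (ε:ℝ) ≤ ε₁ := le_trans hε (le_trans (min_le_left _ _) (min_le_right _ _))
      have hε2 : (ε:ℝ) ≤ 1/2 := le_trans hε (min_le_right _ _)
      calc ‖(x + y) ε‖ ≤ ‖x ε‖ + ‖y ε‖ := norm_add_le _ _
        _ ≤ (ε:ℝ) ^ a + (ε:ℝ) ^ b := add_le_add (ha ε hε₀) (hb ε hε₁)
        _ ≤ (ε:ℝ) ^ (min a b - 1) := rpow_two_bound ε.2.1 hε2 a b
  neg_mem' := by
    rintro x ⟨a, ε₀, h₀, ha⟩
    exact ⟨a, ε₀, h₀, fun ε hε => by simpa using ha ε hε⟩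
  mul_mem' := by
    rintro x y ⟨a, ε₀, h₀, ha⟩ ⟨b, ε₁, h₁, hb⟩
    refine ⟨a + b, min ε₀ ε₁, ⟨lt_min h₀.1 h₁.1, lt_of_le_of_lt (min_le_left _ _) h₀.2⟩,
      fun ε hε => ?_⟩
    have hε₀ : (ε:ℝ) ≤ ε₀ := le_trans hε (min_le_left _ _)
    have hε₁ : (ε:ℝ) ≤ ε₁ := le_trans hε (min_le_right _ _)
    calc ‖(x * y) ε‖ = ‖x ε‖ * ‖y ε‖ := norm_mul _ _
      _ ≤ (ε:ℝ) ^ a * (ε:ℝ) ^ b :=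
        mul_le_mul (ha ε hε₀) (hb ε hε₁) (norm_nonneg _) (Real.rpow_pos_of_pos ε.2.1 _).le
      _ = (ε:ℝ) ^ (a + b) := (Real.rpow_add ε.2.1 _ _).symm

theorem mem_moderate {f : Eps → K} (h : IsModerate K f) : f ∈ Moderate K := h

/-- The ideal of negligible nets in the ring of moderate nets. -/
def Negligible : Ideal (Moderate K) where
  carrier := {x | IsNegligible K (x : Eps → K)}
  zero_mem' := by
    intro a
    refine ⟨1/2, by constructor <;> norm_num, fun ε _ => ?_⟩
    have : (0:ℝ) ≤ (ε:ℝ) ^ a := (Real.rpow_pos_of_pos ε.2.1 _).le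
    simpa using this
  add_mem' := by
    intro x y hx hy a
    obtain ⟨ε₀, h₀, ha⟩ := hx (a + 1)
    obtain ⟨ε₁, h₁, hb⟩ := hy (a + 1)
    refine ⟨min (min ε₀ ε₁) (1/2), ⟨lt_min (lt_min h₀.1 h₁.1) (by norm_num), ?_⟩, fun ε hε => ?_⟩
    · calc min (min ε₀ ε₁) (1/2) ≤ 1/2 := min_le_right _ _
        _ < 1 := by norm_num
    · have hε₀ : (ε:ℝ) ≤ ε₀ := le_trans hε (le_trans (min_le_left _ _) (min_le_left _ _))
      have hε₁ : (ε:ℝ) ≤ ε₁ := le_trans hε (le_trans (min_le_left _ _) (min_le_right _ _))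
      have hε2 : (ε:ℝ) ≤ 1/2 := le_trans hε (min_le_right _ _)
      have hbd := rpow_two_bound (ε := (ε:ℝ)) ε.2.1 hε2 (a+1) (a+1)
      simp only [min_self, add_sub_cancel_right] at hbd
      calc ‖((x + y : Moderate K) : Eps → K) ε‖ ≤ ‖(x : Eps → K) ε‖ + ‖(y : Eps → K) ε‖ := by
            push_cast
            exact norm_add_le _ _
        _ ≤ (ε:ℝ) ^ (a+1) + (ε:ℝ) ^ (a+1) := add_le_add (ha ε hε₀) (hb ε hε₁)
        _ ≤ (ε:ℝ) ^ a := hbd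
  smul_mem' := by
    intro c x hx
    show IsNegligible K ((c * x : Moderate K) : Eps → K)
    intro a
    obtain ⟨b, ε₀, h₀, hc⟩ := c.property
    obtain ⟨ε₁, h₁, hxa⟩ := hx (a - b)
    refine ⟨min ε₀ ε₁, ⟨lt_min h₀.1 h₁.1, lt_of_le_of_lt (min_le_left _ _) h₀.2⟩,
      fun ε hε => ?_⟩
    have hε₀ : (ε:ℝ) ≤ ε₀ := le_trans hε (min_le_left _ _)
    have hε₁ : (ε:ℝ) ≤ ε₁ := le_trans hε (min_le_right _ _)
    calc ‖((c * x : Moderate K) : Eps → K) ε‖ = ‖(c : Eps → K) ε‖ * ‖(x : Eps → K) ε‖ := by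
          push_cast
          exact norm_mul _ _
      _ ≤ (ε:ℝ) ^ b * (ε:ℝ) ^ (a - b) :=
        mul_le_mul (hc ε hε₀) (hxa ε hε₁) (norm_nonneg _) (Real.rpow_pos_of_pos ε.2.1 _).le
      _ = (ε:ℝ) ^ a := by rw [← Real.rpow_add ε.2.1]; ring_nf

/-- The ring of Colombeau generalized numbers: the quotient of the ring of
moderate nets by the ideal of negligible nets. -/
abbrev CGen : Type := Moderate K ⧸ Negligible K

/-- The quotient map. -/
abbrev cmk : Moderate K →+* CGen K := Ideal.Quotient.mk (Negligible K)

/-- A canonical representative of a Colombeau generalized number. -/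
def rep (x : CGen K) : Moderate K := (Ideal.Quotient.mk_surjective x).choose

theorem rep_spec (x : CGen K) : cmk K (rep K x) = x :=
  (Ideal.Quotient.mk_surjective x).choose_spec

theorem indicator_moderate (S : Set Eps) :
    IsModerate K (fun ε => if ε ∈ S then (1:K) else 0) := by
  refine ⟨0, 1/2, by constructor <;> norm_num, fun ε _ => ?_⟩
  rw [Real.rpow_zero]
  by_cases h : ε ∈ S <;> simp [h]

/-- `e_S`: the generalized number given by the characteristic function of `S ⊆ (0,1)`. -/
def eS (S : Set Eps) : CGen K :=
  cmk K ⟨fun ε => if ε ∈ S then (1:K) else 0, mem_moderate K (indicator_moderate K S)⟩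

theorem absNet_moderate (f : Moderate K) :
    IsModerate K (fun ε => ((‖(f : Eps → K) ε‖ : ℝ) : K)) := by
  obtain ⟨a, ε₀, h₀, h⟩ := f.property
  refine ⟨a, ε₀, h₀, fun ε hε => ?_⟩
  simpa [RCLike.norm_ofReal, abs_norm] using h ε hε

/-- `|x|`: the class of the net `(|x_ε|)_ε` (for any representative of `x`). -/
def absC (x : CGen K) : CGen K :=
  cmk K ⟨_, mem_moderate K (absNet_moderate K (rep K x))⟩

theorem minNet_moderate (f g : Moderate K) :
    IsModerate K (fun ε => ((min ‖(f : Eps → K) ε‖ ‖(g : Eps → K) ε‖ : ℝ) : K)) := by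
  obtain ⟨a, ε₀, h₀, h⟩ := f.property
  refine ⟨a, ε₀, h₀, fun ε hε => ?_⟩
  rw [RCLike.norm_ofReal, abs_of_nonneg (le_min (norm_nonneg _) (norm_nonneg _))]
  exact le_trans (min_le_left _ _) (h ε hε)

/-- `|x| ∧ |y|`: the class of the pointwise minimum of `(|x_ε|)_ε` and `(|y_ε|)_ε`. -/
def infAbs (x y : CGen K) : CGen K :=
  cmk K ⟨_, mem_moderate K (minNet_moderate K (rep K x) (rep K y))⟩

theorem sqrtNet_moderate (f : Moderate K) :
    IsModerate K (fun ε => ((Real.sqrt ‖(f : Eps → K) ε‖ : ℝ) : K)) := by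
  obtain ⟨a, ε₀, h₀, h⟩ := f.property
  refine ⟨a / 2, ε₀, h₀, fun ε hε => ?_⟩
  rw [RCLike.norm_ofReal, abs_of_nonneg (Real.sqrt_nonneg _)]
  calc Real.sqrt ‖(f : Eps → K) ε‖ ≤ Real.sqrt ((ε:ℝ) ^ a) := Real.sqrt_le_sqrt (h ε hε)
    _ = (ε:ℝ) ^ (a / 2) := by
        rw [Real.sqrt_eq_rpow, ← Real.rpow_mul ε.2.1.le]
        ring_nf

/-- `√|x|`: the class of the net `(√|x_ε|)_ε` (for any representative of `x`). -/
def sqrtAbs (x : CGen K) : CGen K :=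
  cmk K ⟨_, mem_moderate K (sqrtNet_moderate K (rep K x))⟩

/-- The annihilator `Ann(a) = {x : x·a = 0}` as an ideal. -/
def annIdeal (a : CGen K) : Ideal (CGen K) where
  carrier := {x | x * a = 0}
  zero_mem' := by simp
  add_mem' := by
    intro x y hx hy
    show (x + y) * a = 0
    rw [add_mul, hx, hy, add_zero]
  smul_mem' := by
    intro c x hx
    show c * x * a = 0
    rw [mul_assoc, hx, mul_zero]

/-- The order relation on `𝕂̃`: `x ≤ y` iff there exist (real-valued) representatives
`(u_ε)_ε` of `x` and `(v_ε)_ε` of `y` with `u_ε ≤ v_ε` for all `ε`. -/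
def leC (x y : CGen K) : Prop :=
  ∃ u v : Moderate K, cmk K u = x ∧ cmk K v = y ∧
    ∀ ε : Eps, ∃ r s : ℝ, (u : Eps → K) ε = (r : K) ∧ (v : Eps → K) ε = (s : K) ∧ r ≤ s

/-- A z-ideal: if `b ∈ I` and `a` belongs to exactly the same maximal ideals as `b`,
then `a ∈ I`. -/
def IsZIdeal (I : Ideal (CGen K)) : Prop :=
  ∀ a b : CGen K, b ∈ I →
    (∀ M : Ideal (CGen K), M.IsMaximal → (a ∈ M ↔ b ∈ M)) → a ∈ I

/-! Membership in an ideal of `𝕂̃` is governed by the pointwise size of representatives: if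
`|x_ε| ≤ |y_ε|` for all `ε`, then `x = c·y` with `c_ε = x_ε / y_ε` bounded by `1`. Hence `x` and
`|x|` generate the same ideal, `√|x|·√|x| = |x|` and `√|x·x| = |x|`, so the square-root condition
is equivalent to radicality. Conversely, radicality and the `e_S` condition give primality: for
`ab ∈ I` put `m = |a| ∧ |b|`; then `ab ∣ m²`, so `m ∈ I` by radicality, and with
`S = {ε : |a_ε| ≤ |b_ε|}` both `e_S a` and `e_{∁S} b` are multiples of `m`. Since
`e_S + e_{∁S} = 1`, whichever of `e_S`, `e_{∁S}` lies in `I` puts `b` resp. `a` into `I`. -/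

section Nets

variable {K}

theorem isModerate_of_norm_le_one {c : Eps → K} (h : ∀ ε, ‖c ε‖ ≤ 1) : IsModerate K c :=
  ⟨0, 1/2, by norm_num, fun ε _ => by simpa using h ε⟩

theorem cmk_dvd_cmk_of_norm_le {f g : Moderate K}
    (h : ∀ ε, ‖(f : Eps → K) ε‖ ≤ ‖(g : Eps → K) ε‖) : cmk K g ∣ cmk K f := by
  have hc : IsModerate K fun ε => (f : Eps → K) ε / (g : Eps → K) ε := by
    refine isModerate_of_norm_le_one fun ε => ?_
    rw [norm_div]
    exact div_le_one_of_le₀ (h ε) (norm_nonneg _)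
  refine ⟨cmk K ⟨_, mem_moderate K hc⟩, ?_⟩
  rw [mul_comm, ← map_mul]
  congr 1
  ext ε
  change (f : Eps → K) ε = (f : Eps → K) ε / (g : Eps → K) ε * (g : Eps → K) ε
  by_cases hg : (g : Eps → K) ε = 0
  · have := h ε
    rw [hg, norm_zero, norm_le_zero_iff] at this
    simp [this]
  · rw [div_mul_cancel₀ _ hg]

theorem abs_sqrt_sub_sqrt_le {p q : ℝ} (hp : 0 ≤ p) (hq : 0 ≤ q) :
    |√p - √q| ≤ √|p - q| := by
  have sqrt_le : ∀ s t : ℝ, 0 ≤ t → √s ≤ √t + √|s - t| := fun s t ht => by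
    refine Real.sqrt_le_iff.mpr ⟨by positivity, ?_⟩
    have := le_abs_self (s - t)
    nlinarith [Real.sq_sqrt ht, Real.sq_sqrt (abs_nonneg (s - t)),
      mul_nonneg (Real.sqrt_nonneg t) (Real.sqrt_nonneg |s - t|)]
  rw [abs_sub_le_iff]
  constructor
  · linarith [sqrt_le p q hq]
  · have := sqrt_le q p hp
    rw [abs_sub_comm] at this
    linarith

theorem isNegligible_of_norm_le_sqrt {u v : Eps → K} (hv : IsNegligible K v)
    (h : ∀ ε, ‖u ε‖ ≤ √‖v ε‖) : IsNegligible K u := by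
  intro a
  obtain ⟨ε₀, hε₀, hv⟩ := hv (2 * a)
  refine ⟨ε₀, hε₀, fun ε hε => (h ε).trans ?_⟩
  calc √‖v ε‖ ≤ √((ε : ℝ) ^ (2 * a)) := Real.sqrt_le_sqrt (hv ε hε)
    _ = (ε : ℝ) ^ a := by
      rw [mul_comm, Real.rpow_mul ε.2.1.le, Real.rpow_two,
        Real.sqrt_sq (Real.rpow_nonneg ε.2.1.le a)]

theorem cmk_dvd_eS_mul_of_norm_le {f g : Moderate K} {S : Set Eps}
    (h : ∀ ε ∈ S, ‖(f : Eps → K) ε‖ ≤ ‖(g : Eps → K) ε‖) : cmk K g ∣ eS K S * cmk K f := by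
  rw [eS, ← map_mul]
  refine cmk_dvd_cmk_of_norm_le fun ε => ?_
  change ‖(if ε ∈ S then (1 : K) else 0) * (f : Eps → K) ε‖ ≤ _
  by_cases hε : ε ∈ S
  · simpa [hε] using h ε hε
  · simp [hε]

end Nets

theorem eS_mul_eS_compl (S : Set Eps) : eS K S * eS K Sᶜ = 0 := by
  rw [eS, eS, ← map_mul, ← map_zero (cmk K)]
  congr 1
  ext ε
  by_cases hε : ε ∈ S <;> simp [hε]

theorem eS_add_eS_compl (S : Set Eps) : eS K S + eS K Sᶜ = 1 := by
  rw [eS, eS, ← map_add, ← map_one (cmk K)]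
  congr 1
  ext ε
  by_cases hε : ε ∈ S <;> simp [hε]

theorem absC_dvd (x : CGen K) : absC K x ∣ x := by
  conv_rhs => rw [← rep_spec K x]
  exact cmk_dvd_cmk_of_norm_le fun ε => by simp

theorem dvd_absC (x : CGen K) : x ∣ absC K x := by
  conv_lhs => rw [← rep_spec K x]
  exact cmk_dvd_cmk_of_norm_le fun ε => by simp

theorem absC_mem_iff {I : Ideal (CGen K)} {x : CGen K} : absC K x ∈ I ↔ x ∈ I :=
  ⟨I.mem_of_dvd (absC_dvd K x), I.mem_of_dvd (dvd_absC K x)⟩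

theorem mul_self_sqrtAbs (x : CGen K) : sqrtAbs K x * sqrtAbs K x = absC K x := by
  rw [sqrtAbs, absC, ← map_mul]
  congr 1
  ext ε
  simp [← RCLike.ofReal_mul]

theorem sqrtAbs_mul_self (x : CGen K) : sqrtAbs K (x * x) = absC K x := by
  set w := rep K (x * x)
  set f := rep K x
  have hw : IsNegligible K ((w : Eps → K) - ((f * f : Moderate K) : Eps → K)) :=
    Ideal.Quotient.eq.mp (show cmk K w = cmk K (f * f) by rw [map_mul, rep_spec, rep_spec])
  rw [sqrtAbs, absC, Ideal.Quotient.eq]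
  refine isNegligible_of_norm_le_sqrt hw fun ε => ?_
  change ‖((√‖(w : Eps → K) ε‖ : ℝ) : K) - ((‖(f : Eps → K) ε‖ : ℝ) : K)‖
    ≤ √‖(w : Eps → K) ε - (f : Eps → K) ε * (f : Eps → K) ε‖
  calc _ = |√‖(w : Eps → K) ε‖ - √‖(f : Eps → K) ε * (f : Eps → K) ε‖| := by
        rw [← RCLike.ofReal_sub, RCLike.norm_ofReal, norm_mul,
          Real.sqrt_mul_self (norm_nonneg _)]
    _ ≤ √|‖(w : Eps → K) ε‖ - ‖(f : Eps → K) ε * (f : Eps → K) ε‖| :=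
        abs_sqrt_sub_sqrt_le (norm_nonneg _) (norm_nonneg _)
    _ ≤ _ := Real.sqrt_le_sqrt (abs_norm_sub_norm_le _ _)

theorem mul_dvd_infAbs_mul_self (a b : CGen K) : a * b ∣ infAbs K a b * infAbs K a b := by
  conv_lhs => rw [← rep_spec K a, ← rep_spec K b, ← map_mul]
  rw [infAbs, ← map_mul]
  refine cmk_dvd_cmk_of_norm_le fun ε => ?_
  change ‖((min _ _ : ℝ) : K) * ((min _ _ : ℝ) : K)‖
    ≤ ‖(rep K a : Eps → K) ε * (rep K b : Eps → K) ε‖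
  rw [norm_mul, norm_mul, RCLike.norm_ofReal, abs_of_nonneg (by positivity)]
  exact mul_le_mul (min_le_left _ _) (min_le_right _ _) (by positivity) (norm_nonneg _)

theorem exists_infAbs_dvd_eS_mul (a b : CGen K) :
    ∃ S : Set Eps, infAbs K a b ∣ eS K S * a ∧ infAbs K a b ∣ eS K Sᶜ * b := by
  set f := rep K a
  set g := rep K b
  have norm_min : ∀ ε, ‖((min ‖(f : Eps → K) ε‖ ‖(g : Eps → K) ε‖ : ℝ) : K)‖
      = min ‖(f : Eps → K) ε‖ ‖(g : Eps → K) ε‖ := fun ε => by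
    rw [RCLike.norm_ofReal, abs_of_nonneg (by positivity)]
  refine ⟨{ε | ‖(f : Eps → K) ε‖ ≤ ‖(g : Eps → K) ε‖}, ?_, ?_⟩
  · conv_rhs => rw [← rep_spec K a]
    exact cmk_dvd_eS_mul_of_norm_le fun ε hε => (norm_min ε ▸ min_eq_left hε).ge
  · conv_rhs => rw [← rep_spec K b]
    exact cmk_dvd_eS_mul_of_norm_le fun ε (hε : ¬_) =>
      (norm_min ε ▸ min_eq_right (le_of_not_ge hε)).ge

theorem radical_iff_forall_sqrtAbs_mem (I : Ideal (CGen K)) :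
    (∀ x : CGen K, x * x ∈ I → x ∈ I) ↔ ∀ x ∈ I, sqrtAbs K x ∈ I := by
  constructor
  · intro hrad x hx
    exact hrad _ (mul_self_sqrtAbs K x ▸ (absC_mem_iff K).mpr hx)
  · intro hsqrt x hx
    exact (absC_mem_iff K).mp (sqrtAbs_mul_self K x ▸ hsqrt _ hx)

theorem isPrime_of_eS_mem_or_of_radical (I : Ideal (CGen K)) (hI : I ≠ ⊤)
    (heS : ∀ S : Set Eps, eS K S ∈ I ∨ eS K Sᶜ ∈ I)
    (hrad : ∀ x : CGen K, x * x ∈ I → x ∈ I) : I.IsPrime := by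
  refine ⟨hI, fun {a b} hab => ?_⟩
  have hm : infAbs K a b ∈ I := hrad _ (I.mem_of_dvd (mul_dvd_infAbs_mul_self K a b) hab)
  obtain ⟨S, ha, hb⟩ := exists_infAbs_dvd_eS_mul K a b
  rcases heS S with hS | hSc
  · right
    rw [← one_mul b, ← eS_add_eS_compl K S, add_mul]
    exact I.add_mem (I.mul_mem_right b hS) (I.mem_of_dvd hb hm)
  · left
    rw [← one_mul a, ← eS_add_eS_compl K S, add_mul]
    exact I.add_mem (I.mem_of_dvd ha hm) (I.mul_mem_right a hSc)

/-- a proper ideal `I` of `𝕂̃` is prime iff it is pseudoprime and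
radical; explicitly, iff (`∀ S ⊆ (0,1)`, `e_S ∈ I` or `e_{∁S} ∈ I`) and
(`∀ x ∈ I`, the class of `(√|x_ε|)_ε` belongs to `I`). -/
theorem stmt5 (I : Ideal (CGen K)) (hI : I ≠ ⊤) :
    (I.IsPrime ↔
      (∀ a b : CGen K, a * b = 0 → a ∈ I ∨ b ∈ I) ∧ (∀ x : CGen K, x * x ∈ I → x ∈ I)) ∧
    (I.IsPrime ↔
      (∀ S : Set Eps, eS K S ∈ I ∨ eS K Sᶜ ∈ I) ∧ (∀ x ∈ I, sqrtAbs K x ∈ I)) := by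
  have pseudoprime_of_prime (hp : I.IsPrime) : ∀ a b : CGen K, a * b = 0 → a ∈ I ∨ b ∈ I :=
    fun a b hab => hp.mem_or_mem (hab ▸ I.zero_mem)
  have radical_of_prime (hp : I.IsPrime) : ∀ x : CGen K, x * x ∈ I → x ∈ I :=
    fun x hx => (hp.mem_or_mem hx).elim id id
  have eS_of_pseudoprime (hps : ∀ a b : CGen K, a * b = 0 → a ∈ I ∨ b ∈ I) (S : Set Eps) :
      eS K S ∈ I ∨ eS K Sᶜ ∈ I :=
    hps _ _ (eS_mul_eS_compl K S)
  have prime_of := isPrime_of_eS_mem_or_of_radical K I hI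
  have radical_iff := radical_iff_forall_sqrtAbs_mem K I
  exact ⟨⟨fun hp => ⟨pseudoprime_of_prime hp, radical_of_prime hp⟩,
      fun h => prime_of (eS_of_pseudoprime h.1) h.2⟩,
    ⟨fun hp => ⟨eS_of_pseudoprime (pseudoprime_of_prime hp),
        radical_iff.mp (radical_of_prime hp)⟩,
      fun h => prime_of h.1 (radical_iff.mpr h.2)⟩⟩

end
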